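/- If m is odd, then the order map from the set of normal subgroups of the dihedral group D_{2m} to the divisors of 2m is injective: D_{2m} has no two distinct normal subgroups of the same order. -/

import Mathlib

/-!
When `2` is invertible mod `m`, conjugating a reflection `sr i` by rotations `r k` reaches every
reflection `sr (i - 2k)`, and products of reflections give every rotation; so a normal subgroup
containing a reflection is everything. A proper normal subgroup therefore lies in the cyclic
rotation subgroup, where a subgroup of order `d` is the kernel of `x ↦ x ^ d`, hence determined
by its order.
-/

open Subgroup DihedralGroup

theorem IsCyclic.eq_ker_powMonoidHom_card {G : Type*} [CommGroup G] [Finite G] [IsCyclic G]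
    (H : Subgroup G) : H = (powMonoidHom (Nat.card H) : G →* G).ker := by
  refine eq_of_le_of_card_ge (fun x hx => ?_) ?_
  · rw [MonoidHom.mem_ker, powMonoidHom_apply]
    exact congrArg Subtype.val (pow_card_eq_one' (x := (⟨x, hx⟩ : H)))
  · rw [IsCyclic.card_powMonoidHom_ker, Nat.gcd_eq_right (card_subgroup_dvd_card H)]

theorem IsCyclic.subgroup_eq_of_card_eq {G : Type*} [Group G] [Finite G] [IsCyclic G]
    {H K : Subgroup G} (h : Nat.card H = Nat.card K) : H = K := by
  let _ := IsCyclic.commGroup (α := G)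
  rw [IsCyclic.eq_ker_powMonoidHom_card H, IsCyclic.eq_ker_powMonoidHom_card K, h]

theorem Subgroup.eq_of_card_eq_of_le_of_isCyclic {G : Type*} [Group G] {C H K : Subgroup G}
    [Finite C] [IsCyclic C] (hH : H ≤ C) (hK : K ≤ C) (h : Nat.card H = Nat.card K) :
    H = K := by
  have hHK : H.subgroupOf C = K.subgroupOf C := IsCyclic.subgroup_eq_of_card_eq <| by
    rw [Nat.card_congr (subgroupOfEquivOfLe hH).toEquiv,
      Nat.card_congr (subgroupOfEquivOfLe hK).toEquiv, h]
  rwa [subgroupOf_inj, inf_of_le_left hH, inf_of_le_left hK] at hHK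

namespace DihedralGroup

variable {n : ℕ}

theorem r_mem_zpowers_r_one (i : ZMod n) : r i ∈ zpowers (r 1 : DihedralGroup n) :=
  ⟨(i.cast : ℤ), by simp only [r_one_zpow, ZMod.intCast_zmod_cast]⟩

theorem eq_top_of_sr_mem (h2 : IsUnit (2 : ZMod n)) {N : Subgroup (DihedralGroup n)} [N.Normal]
    {i : ZMod n} (hi : sr i ∈ N) : N = ⊤ := by
  have hsr (j : ZMod n) : sr j ∈ N := by
    have hconj := ‹N.Normal›.conj_mem _ hi (r ((i - j) * h2.unit⁻¹))
    rw [inv_r, r_mul_sr, sr_mul_r] at hconj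
    convert hconj using 2
    linear_combination (i - j) * h2.mul_val_inv
  rw [eq_top_iff]
  rintro (j | j) -
  · simpa [sr_mul_sr] using N.mul_mem (hsr 0) (hsr j)
  · exact hsr j

theorem le_zpowers_r_one_of_normal (h2 : IsUnit (2 : ZMod n)) {N : Subgroup (DihedralGroup n)}
    [N.Normal] (hN : N ≠ ⊤) : N ≤ zpowers (r 1) := by
  rintro (j | j) hj
  · exact r_mem_zpowers_r_one j
  · exact absurd (eq_top_of_sr_mem h2 hj) hN

end DihedralGroup

theorem dihedral_odd_normal_card_injective (m : ℕ) (hm : Odd m)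
    (H K : Subgroup (DihedralGroup m)) (hH : H.Normal) (hK : K.Normal)
    (hcard : Nat.card H = Nat.card K) :
    H = K := by
  have : NeZero m := ⟨hm.pos.ne'⟩
  have h2 : IsUnit (2 : ZMod m) := by
    simpa using (ZMod.isUnit_iff_coprime 2 m).mpr hm.coprime_two_left
  by_cases hHt : H = ⊤
  · rw [hHt, eq_comm, ← card_eq_iff_eq_top, ← hcard, hHt, card_top]
  by_cases hKt : K = ⊤
  · rw [hKt, ← card_eq_iff_eq_top, hcard, hKt, card_top]
  exact eq_of_card_eq_of_le_of_isCyclic (le_zpowers_r_one_of_normal h2 hHt)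
    (le_zpowers_r_one_of_normal h2 hKt) hcard
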